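/- Let η : ℝ → ℝ be convex and differentiable, and let A₁ ⊂ [0,∞) and A₂ ⊂ (−∞,0] be bounded Lebesgue-measurable sets with measures |A₁| and |A₂|. Let χ denote the signed indicator of the interval between 0 and |A₁| − |A₂|, i.e. χ = 1_{[0, |A₁|−|A₂|]} if |A₁| ≥ |A₂| and χ = −1_{[|A₁|−|A₂|, 0]} otherwise. Then ∫ η′(v) χ(v) dv ≤ ∫ η′(v) ( 1_{A₁}(v) − 1_{A₂}(v) ) dv. -/

import Mathlib

/-!
Write `f = η'`, monotone by convexity, `a = |A₁|` and `b = |A₂|`. Integrating `f` against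
`chiFn (a - b)` gives the oriented integral `∫₀^{a-b} f` in both sign cases. By the bathtub
principle, pushing `A₁` to the left end `[0, a]` of `[0, ∞)` can only lower its integral of `f`,
and pushing `A₂` to the right end `[-b, 0]` of `(-∞, 0]` can only raise it. What remains,
`∫₀^{a-b} f ≤ ∫₀^a f - ∫_{-b}^0 f`, says `∫_{-b}^0 f ≤ ∫_{a-b}^a f`: the right side is the left
one translated by `a ≥ 0`.
-/

open MeasureTheory Real Filter Topology

noncomputable section

/-- Signed indicator `χ_u`: `1_{[0,u]}` if `u ≥ 0`, `-1_{[u,0]}` if `u < 0`. -/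
def chiFn (u : ℝ) (v : ℝ) : ℝ :=
  if 0 ≤ u then Set.indicator (Set.Icc 0 u) (fun _ => (1 : ℝ)) v
  else -Set.indicator (Set.Icc u 0) (fun _ => (1 : ℝ)) v

section Rearrangement

variable {X : Type*} [MeasurableSpace X] {μ : Measure X} {f : X → ℝ} {s t : Set X}

theorem setIntegral_le_setIntegral_of_measure_eq (hs : MeasurableSet s) (ht : MeasurableSet t)
    (hfs : IntegrableOn f s μ) (hft : IntegrableOn f t μ) (hμ : μ s = μ t) (hμs : μ s ≠ ⊤)
    {c : ℝ} (hsc : ∀ x ∈ s \ t, f x ≤ c) (htc : ∀ x ∈ t \ s, c ≤ f x) :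
    ∫ x in s, f x ∂μ ≤ ∫ x in t, f x ∂μ := by
  have hμst : μ (s \ t) ≠ ⊤ := ne_top_of_le_ne_top hμs (measure_mono Set.sdiff_subset)
  have hμts : μ (t \ s) ≠ ⊤ := ne_top_of_le_ne_top (hμ ▸ hμs) (measure_mono Set.sdiff_subset)
  have hμ_sdiff : μ.real (s \ t) = μ.real (t \ s) := by
    rw [measureReal_def, measureReal_def, measure_sdiff_symm hs.nullMeasurableSet
      ht.nullMeasurableSet hμ (ne_top_of_le_ne_top hμs (measure_mono Set.inter_subset_left))]
  have h_above : c * μ.real (t \ s) ≤ ∫ x in t \ s, f x ∂μ :=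
    setIntegral_ge_of_const_le_real (ht.diff hs) hμts htc (hft.mono_set Set.sdiff_subset)
  have h_below : ∫ x in s \ t, f x ∂μ ≤ c * μ.real (s \ t) := by
    simpa [setIntegral_const, mul_comm] using setIntegral_mono_on
      (hfs.mono_set Set.sdiff_subset) (integrableOn_const hμst) (hs.diff ht) hsc
  calc ∫ x in s, f x ∂μ = ∫ x in s ∩ t, f x ∂μ + ∫ x in s \ t, f x ∂μ :=
        (integral_inter_add_sdiff ht hfs).symm
    _ ≤ ∫ x in s ∩ t, f x ∂μ + ∫ x in t \ s, f x ∂μ := by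
        gcongr _ + ?_
        exact h_below.trans (hμ_sdiff ▸ h_above)
    _ = ∫ x in t, f x ∂μ := by rw [Set.inter_comm, integral_inter_add_sdiff hs hft]

end Rearrangement

section Monotone

variable {f : ℝ → ℝ}

theorem Monotone.integrableOn_of_isBounded (hf : Monotone f) {A : Set ℝ}
    (hA : Bornology.IsBounded A) : IntegrableOn f A :=
  (hf.locallyIntegrable.integrableOn_isCompact hA.isCompact_closure).mono_set subset_closure

theorem Monotone.intervalIntegral_le_setIntegral_of_subset_Ici (hf : Monotone f) {A : Set ℝ}
    (hA : MeasurableSet A) (hAb : Bornology.IsBounded A) {p : ℝ} (hAp : A ⊆ Set.Ici p) :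
    ∫ x in p..p + volume.real A, f x ≤ ∫ x in A, f x := by
  have hp : p ≤ p + volume.real A := le_add_of_nonneg_right measureReal_nonneg
  rw [intervalIntegral.integral_of_le hp, ← integral_Icc_eq_integral_Ioc]
  refine setIntegral_le_setIntegral_of_measure_eq measurableSet_Icc hA
    (hf.integrableOn_of_isBounded (Metric.isBounded_Icc _ _)) (hf.integrableOn_of_isBounded hAb)
    ?_ measure_Icc_lt_top.ne (c := f (p + volume.real A)) (fun x hx => hf hx.1.2)
    (fun x hx => hf (not_le.mp fun h => hx.2 ⟨hAp hx.1, h⟩).le)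
  rw [Real.volume_Icc, add_sub_cancel_left, ofReal_measureReal hAb.measure_lt_top.ne]

theorem Monotone.setIntegral_le_intervalIntegral_of_subset_Iic (hf : Monotone f) {A : Set ℝ}
    (hA : MeasurableSet A) (hAb : Bornology.IsBounded A) {q : ℝ} (hAq : A ⊆ Set.Iic q) :
    ∫ x in A, f x ≤ ∫ x in q - volume.real A..q, f x := by
  have hq : q - volume.real A ≤ q := sub_le_self _ measureReal_nonneg
  rw [intervalIntegral.integral_of_le hq, ← integral_Icc_eq_integral_Ioc]
  refine setIntegral_le_setIntegral_of_measure_eq hA measurableSet_Icc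
    (hf.integrableOn_of_isBounded hAb) (hf.integrableOn_of_isBounded (Metric.isBounded_Icc _ _))
    ?_ hAb.measure_lt_top.ne (c := f (q - volume.real A))
    (fun x hx => hf (not_lt.mp fun h => hx.2 ⟨h.le, hAq hx.1⟩)) (fun x hx => hf hx.1.1)
  rw [Real.volume_Icc, sub_sub_cancel, ofReal_measureReal hAb.measure_lt_top.ne]

theorem Monotone.intervalIntegral_le_intervalIntegral_add (hf : Monotone f) {p q d : ℝ}
    (hpq : p ≤ q) (hd : 0 ≤ d) : ∫ x in p..q, f x ≤ ∫ x in p + d..q + d, f x := by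
  rw [← intervalIntegral.integral_comp_add_right]
  exact intervalIntegral.integral_mono_on hpq hf.intervalIntegrable
    (hf.comp (monotone_id.add_const d)).intervalIntegrable
    (fun x _ => hf (le_add_of_nonneg_right hd))

end Monotone

theorem integral_mul_indicator_one {f : ℝ → ℝ} {s : Set ℝ} (hs : MeasurableSet s) :
    ∫ v, f v * s.indicator (fun _ => (1 : ℝ)) v = ∫ v in s, f v := by
  simp_rw [← Set.indicator_mul_right, mul_one]
  exact integral_indicator hs

theorem integral_mul_chiFn (f : ℝ → ℝ) (u : ℝ) :
    ∫ v, f v * chiFn u v = ∫ v in 0..u, f v := by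
  by_cases hu : 0 ≤ u
  · simp only [chiFn, if_pos hu]
    rw [integral_mul_indicator_one measurableSet_Icc, intervalIntegral.integral_of_le hu,
      integral_Icc_eq_integral_Ioc]
  · simp only [chiFn, if_neg hu, mul_neg]
    rw [integral_neg, integral_mul_indicator_one measurableSet_Icc,
      intervalIntegral.integral_symm, intervalIntegral.integral_of_le (not_le.mp hu).le,
      integral_Icc_eq_integral_Ioc]

theorem integral_mul_indicator_sub_indicator {f : ℝ → ℝ} {s t : Set ℝ} (hs : MeasurableSet s)
    (ht : MeasurableSet t) (hfs : IntegrableOn f s) (hft : IntegrableOn f t) :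
    ∫ v, f v * (s.indicator (fun _ => (1 : ℝ)) v - t.indicator (fun _ => (1 : ℝ)) v)
      = (∫ v in s, f v) - ∫ v in t, f v := by
  simp_rw [mul_sub, ← Set.indicator_mul_right, mul_one]
  rw [integral_sub ((integrable_indicator_iff hs).2 hfs) ((integrable_indicator_iff ht).2 hft),
    integral_indicator hs, integral_indicator ht]

/-- **Brenier's convexity lemma**. -/
theorem brenier_convexity_lemma
    (η : ℝ → ℝ) (hconv : ConvexOn ℝ Set.univ η) (hdiff : ∀ v, DifferentiableAt ℝ η v)
    (A₁ A₂ : Set ℝ) (hm₁ : MeasurableSet A₁) (hm₂ : MeasurableSet A₂)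
    (hb₁ : Bornology.IsBounded A₁) (hb₂ : Bornology.IsBounded A₂)
    (hs₁ : A₁ ⊆ Set.Ici 0) (hs₂ : A₂ ⊆ Set.Iic 0) :
    (∫ v, deriv η v * chiFn ((volume A₁).toReal - (volume A₂).toReal) v)
      ≤ ∫ v, deriv η v *
          (Set.indicator A₁ (fun _ => (1 : ℝ)) v - Set.indicator A₂ (fun _ => (1 : ℝ)) v) := by
  have hf : Monotone (deriv η) :=
    monotoneOn_univ.mp (hconv.monotoneOn_deriv fun v _ => hdiff v)
  rw [← measureReal_def, ← measureReal_def, integral_mul_chiFn,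
    integral_mul_indicator_sub_indicator hm₁ hm₂ (hf.integrableOn_of_isBounded hb₁)
      (hf.integrableOn_of_isBounded hb₂)]
  set a := volume.real A₁
  set b := volume.real A₂
  have h₁ : ∫ x in 0..a, deriv η x ≤ ∫ x in A₁, deriv η x := by
    simpa using hf.intervalIntegral_le_setIntegral_of_subset_Ici hm₁ hb₁ hs₁
  have h₂ : ∫ x in A₂, deriv η x ≤ ∫ x in -b..0, deriv η x := by
    simpa using hf.setIntegral_le_intervalIntegral_of_subset_Iic hm₂ hb₂ hs₂
  have h_shift : ∫ x in -b..0, deriv η x ≤ ∫ x in a - b..a, deriv η x := by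
    simpa [neg_add_eq_sub] using hf.intervalIntegral_le_intervalIntegral_add
      (neg_nonpos.mpr measureReal_nonneg) measureReal_nonneg
  have h_split :
      (∫ x in 0..a, deriv η x) - ∫ x in 0..a - b, deriv η x = ∫ x in a - b..a, deriv η x :=
    intervalIntegral.integral_interval_sub_left hf.intervalIntegrable hf.intervalIntegrable
  linarith

end
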